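/- arXiv:0910.5519 — 6 statements merged into one kernel-verified Lean document; each statement's English description precedes it below -/
import Mathlib

section
/- Let V be a 2n-dimensional real symplectic vector space with symplectic form L, n ≥ 2. Define S² = Sym²(V*) ⊕ ℝ·L inside V*⊗V*. Then the intersection (V* ⊗ S²) ∩ (S² ⊗ V*) inside V*⊗V*⊗V* equals the set of tensors of the form φ_{abc} = P_{abc} + Q_a L_{bc} + Q_b L_{ac} + Q_c L_{ab} where P is totally symmetric and Q ∈ V*. -/
/-- A bilinear form `B` on a symplectic vector space `(V, L)` lies in
`S² = Sym²(V*) ⊕ ℝ·L` iff it is the sum of a symmetric bilinear form and a scalar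
multiple of the symplectic form `L`. -/
def MemS2 {V : Type*} [AddCommGroup V] [Module ℝ V]
    (L : V →ₗ[ℝ] V →ₗ[ℝ] ℝ) (B : V → V → ℝ) : Prop :=
  ∃ (P : V → V → ℝ) (Q : ℝ), (∀ x y, P x y = P y x) ∧ ∀ x y, B x y = P x y + Q * L x y

/-- Let `V` be a `2n`-dimensional real symplectic vector space with
symplectic form `L`, `n ≥ 2`.  A trilinear form `φ` lies in
`(V* ⊗ S²) ∩ (S² ⊗ V*)` (inside `V*⊗V*⊗V*`) iff it has the form
`φ_{abc} = P_{abc} + Q_a L_{bc} + Q_b L_{ac} + Q_c L_{ab}` with `P` totally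
symmetric and `Q ∈ V*`. -/
theorem statement0 {V : Type*} [AddCommGroup V] [Module ℝ V] [FiniteDimensional ℝ V]
    (n : ℕ) (hn : 2 ≤ n) (hdim : Module.finrank ℝ V = 2 * n)
    (L : V →ₗ[ℝ] V →ₗ[ℝ] ℝ)
    (halt : ∀ x : V, L x x = 0)
    (hnd : ∀ x : V, (∀ y : V, L x y = 0) → x = 0)
    (φ : V →ₗ[ℝ] V →ₗ[ℝ] V →ₗ[ℝ] ℝ) :
    ((∀ x : V, MemS2 L (fun y z => φ x y z)) ∧
      (∀ z : V, MemS2 L (fun x y => φ x y z))) ↔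
    ∃ (P : V → V → V → ℝ) (Q : V →ₗ[ℝ] ℝ),
      (∀ x y z, P x y z = P y x z ∧ P x y z = P x z y) ∧
      ∀ x y z, φ x y z = P x y z + Q x * L y z + Q y * L x z + Q z * L x y := by
  have hL : ∀ x y : V, L x y = - L y x := by
    intro x y
    have h := halt (x + y)
    simp only [map_add, LinearMap.add_apply, halt x, halt y] at h
    linarith
  constructor
  · rintro ⟨h1, h2⟩
    have hVpos : 0 < Module.finrank ℝ V := by omega
    have hnt : Nontrivial V := Module.nontrivial_of_finrank_pos hVpos
    obtain ⟨v, hv⟩ := exists_ne (0 : V)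
    obtain ⟨w, hw⟩ : ∃ w, L v w ≠ 0 := by
      by_contra h; push_neg at h; exact hv (hnd v h)
    set e := v with he
    set f := (L v w)⁻¹ • w with hf
    have hef : L e f = 1 := by
      rw [hf, map_smul, smul_eq_mul]; exact inv_mul_cancel₀ hw
    have hfe : L f e = -1 := by rw [hL, hef]
    set q1 : V → ℝ := fun x => (φ x e f - φ x f e) / 2 with hq1
    set q2 : V → ℝ := fun z => (φ e f z - φ f e z) / 2 with hq2
    have hA : ∀ x y z, φ x y z - φ x z y = 2 * q1 x * L y z := by
      intro x y z
      obtain ⟨P, Q, hPs, hB⟩ := h1 x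
      have hQ1 : q1 x = Q := by
        simp only [hq1]
        linear_combination (hB e f)/2 - (hB f e)/2 + (hPs e f)/2 + (Q/2) * hef - (Q/2) * hfe
      linear_combination hB y z - hB z y + hPs y z - Q * hL z y - (2 * L y z) * hQ1
    have hB : ∀ x y z, φ x y z - φ y x z = 2 * q2 z * L x y := by
      intro x y z
      obtain ⟨P, Q, hPs, hBz⟩ := h2 z
      have hQ2 : q2 z = Q := by
        simp only [hq2]
        linear_combination (hBz e f)/2 - (hBz f e)/2 + (hPs e f)/2 + (Q/2) * hef - (Q/2) * hfe
      linear_combination hBz x y - hBz y x + hPs x y - Q * hL y x - (2 * L x y) * hQ2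
    have hpair : ∀ z : V, ∃ x y : V, L z x = 0 ∧ L z y = 0 ∧ L x y = 1 := by
      intro z
      by_cases hz : z = 0
      · exact ⟨e, f, by simp [hz], by simp [hz], hef⟩
      · obtain ⟨u, hu⟩ : ∃ u, L z u ≠ 0 := by
          by_contra h; push_neg at h; exact hz (hnd z h)
        by_cases hex : ∃ x y, L z x = 0 ∧ L z y = 0 ∧ L x y ≠ 0
        · obtain ⟨x, y, h1', h2', h3'⟩ := hex
          refine ⟨x, (L x y)⁻¹ • y, h1', by rw [map_smul]; simp [h2'], ?_⟩
          rw [map_smul, smul_eq_mul]; exact inv_mul_cancel₀ h3'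
        · exfalso
          push_neg at hex
          have hker : ∀ x : V, L z x = 0 → L x u = 0 → x = 0 := by
            intro x h1' h2'
            apply hnd
            intro y
            have hw' : L z (y - (L z y / L z u) • u) = 0 := by
              rw [map_sub, map_smul, smul_eq_mul, div_mul_cancel₀ _ hu, sub_self]
            have hxw := hex x (y - (L z y / L z u) • u) h1' hw'
            rw [map_sub, map_smul] at hxw
            simp only [smul_eq_mul, h2', mul_zero, sub_zero] at hxw
            exact hxw
          set Φ : V →ₗ[ℝ] ℝ × ℝ := (L z).prod (L.flip u) with hΦ
          have hinj : Function.Injective Φ := by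
            rw [← LinearMap.ker_eq_bot, LinearMap.ker_eq_bot']
            intro m hm
            have h1' : L z m = 0 := congrArg Prod.fst hm
            have h2' : L m u = 0 := congrArg Prod.snd hm
            exact hker m h1' h2'
          have hle := LinearMap.finrank_le_finrank_of_injective hinj
          rw [hdim] at hle
          have h2' : Module.finrank ℝ (ℝ × ℝ) = 2 := by
            simp [Module.finrank_prod]
          rw [h2'] at hle
          omega
    have hQeq : ∀ z : V, q2 z = q1 z := by
      intro z
      obtain ⟨x, y, hzx, hzy, hxy⟩ := hpair z
      have hxz : L x z = 0 := by rw [hL, hzx]; ring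
      have hyz : L y z = 0 := by rw [hL, hzy]; ring
      have hyx : L y x = -1 := by rw [hL, hxy]
      have e1 := hB x y z
      have e2 := hA y x z
      have e3 := hB y z x
      have e4 := hA z y x
      have e5 := hB z x y
      have e6 := hA x z y
      rw [hxy] at e1
      rw [hxz] at e2
      rw [hyz] at e3
      rw [hyx] at e4
      rw [hzx] at e5
      rw [hzy] at e6
      linear_combination (-(1:ℝ)/2) * (e1 + e2 + e3 + e4 + e5 + e6)
    refine ⟨fun x y z => φ x y z - q1 x * L y z - q1 y * L x z - q1 z * L x y,
      { toFun := q1,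
        map_add' := by
          intro a b
          simp only [hq1, map_add, LinearMap.add_apply]
          ring
        map_smul' := by
          intro c a
          simp only [hq1, map_smul, LinearMap.smul_apply, smul_eq_mul, RingHom.id_apply]
          ring }, ?_, ?_⟩
    · intro x y z
      constructor
      · show φ x y z - q1 x * L y z - q1 y * L x z - q1 z * L x y
            = φ y x z - q1 y * L x z - q1 x * L y z - q1 z * L y x
        linear_combination hB x y z + (2 * L x y) * hQeq z + q1 z * hL y x
      · show φ x y z - q1 x * L y z - q1 y * L x z - q1 z * L x y
            = φ x z y - q1 x * L z y - q1 z * L x y - q1 y * L x z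
        linear_combination hA x y z + q1 x * hL z y
    · intro x y z
      show φ x y z = (φ x y z - q1 x * L y z - q1 y * L x z - q1 z * L x y)
          + q1 x * L y z + q1 y * L x z + q1 z * L x y
      ring
  · rintro ⟨P, Q, hsym, hφ⟩
    constructor
    · intro x
      refine ⟨fun y z => P x y z + Q y * L x z + Q z * L x y, Q x, ?_, ?_⟩
      · intro y z
        show P x y z + Q y * L x z + Q z * L x y = P x z y + Q z * L x y + Q y * L x z
        linear_combination (hsym x y z).2
      · intro y z
        show φ x y z = (P x y z + Q y * L x z + Q z * L x y) + Q x * L y z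
        rw [hφ x y z]; ring
    · intro z
      refine ⟨fun x y => P x y z + Q x * L y z + Q y * L x z, Q z, ?_, ?_⟩
      · intro x y
        show P x y z + Q x * L y z + Q y * L x z = P y x z + Q y * L x z + Q x * L y z
        linear_combination (hsym x y z).1
      · intro x y
        show φ x y z = (P x y z + Q x * L y z + Q y * L x z) + Q z * L x y
        linear_combination hφ x y z
end

section
/- Let V be a 2n-dimensional real symplectic vector space with symplectic form L and inverse form L^{ab} (so L^{ab}L_{ac} = δ^b_c). For n ≥ 2, any element φ_{abc} of V* ⊗ S² (where S² = Sym²V* ⊕ ℝL) decomposes uniquely as φ_{abc} = P_{abc} + R_{abc} + T_b L_{ac} + T_c L_{ab} + Q_a L_{bc}, where P is totally symmetric, R satisfies R_{abc} = R_{a(bc)}, R_{(abc)} = 0 and L^{ab}R_{abc} = 0, and T, Q ∈ V*. -/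
open scoped BigOperators

namespace Statement1Aux

variable {V : Type*} [AddCommGroup V] [Module ℝ V]

/-- The totally symmetric part. -/
noncomputable def Pf (φ : V →ₗ[ℝ] V →ₗ[ℝ] V →ₗ[ℝ] ℝ) : V → V → V → ℝ :=
  fun x y z => (φ x y z + φ x z y + φ y z x + φ y x z + φ z x y + φ z y x) / 6

/-- The trace-full remainder. -/
noncomputable def Af (φ : V →ₗ[ℝ] V →ₗ[ℝ] V →ₗ[ℝ] ℝ) : V → V → V → ℝ :=
  fun x y z => (φ x y z + φ x z y) / 2 - Pf φ x y z

/-- `Af` as a linear map in its last slot. -/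
noncomputable def Al (φ : V →ₗ[ℝ] V →ₗ[ℝ] V →ₗ[ℝ] ℝ) : V → V → V →ₗ[ℝ] ℝ :=
  fun x y =>
    (1/3 : ℝ) • φ x y + (1/3 : ℝ) • (φ x).flip y - (1/6 : ℝ) • (φ y).flip x
      - (1/6 : ℝ) • φ y x - (1/6 : ℝ) • (φ.flip x).flip y - (1/6 : ℝ) • (φ.flip y).flip x

lemma Al_apply (φ : V →ₗ[ℝ] V →ₗ[ℝ] V →ₗ[ℝ] ℝ) (x y z : V) :
    Al φ x y z = Af φ x y z := by
  simp only [Al, Af, Pf, LinearMap.add_apply, LinearMap.sub_apply, LinearMap.smul_apply,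
    LinearMap.flip_apply, smul_eq_mul]
  ring

/-- The candidate `T`. -/
noncomputable def Tm {ι : Type*} [Fintype ι] (φ : V →ₗ[ℝ] V →ₗ[ℝ] V →ₗ[ℝ] ℝ)
    (e : ι → V) (Linv : ι → ι → ℝ) (c : ℝ) : V →ₗ[ℝ] ℝ :=
  c • ∑ a, ∑ b, Linv a b • Al φ (e a) (e b)

/-- The candidate `Q`. -/
noncomputable def Qm (φ : V →ₗ[ℝ] V →ₗ[ℝ] V →ₗ[ℝ] ℝ) (y₀ z₀ : V) : V →ₗ[ℝ] ℝ :=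
  (1/2 : ℝ) • ((φ.flip y₀).flip z₀ - (φ.flip z₀).flip y₀)

/-- The candidate `R`. -/
noncomputable def Rf (φ : V →ₗ[ℝ] V →ₗ[ℝ] V →ₗ[ℝ] ℝ) (L : V →ₗ[ℝ] V →ₗ[ℝ] ℝ)
    (T : V →ₗ[ℝ] ℝ) : V → V → V → ℝ :=
  fun x y z => Af φ x y z - T y * L x z - T z * L x y

end Statement1Aux

/-- On a `2n`-dimensional symplectic vector space `(V, L)` with `n ≥ 2`
and inverse form `L^{ab}` (`∑_a Linv a b * L (e a) (e c) = δ_{bc}` for a basis `e`),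
every `φ ∈ V* ⊗ S²` decomposes **uniquely** as
`φ_{abc} = P_{abc} + R_{abc} + T_b L_{ac} + T_c L_{ab} + Q_a L_{bc}`,
with `P` totally symmetric, `R_{abc} = R_{a(bc)}`, `R_{(abc)} = 0`,
`L^{ab} R_{abc} = 0`, and `T, Q ∈ V*`. -/
theorem statement1 {V : Type*} [AddCommGroup V] [Module ℝ V] [FiniteDimensional ℝ V]
    (n : ℕ) (hn : 2 ≤ n) (hdim : Module.finrank ℝ V = 2 * n)
    (L : V →ₗ[ℝ] V →ₗ[ℝ] ℝ)
    (halt : ∀ x : V, L x x = 0)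
    (hnd : ∀ x : V, (∀ y : V, L x y = 0) → x = 0)
    (e : Module.Basis (Fin (2 * n)) ℝ V)
    (Linv : Fin (2 * n) → Fin (2 * n) → ℝ)
    (hinv : ∀ b c, (∑ a, Linv a b * L (e a) (e c)) = if b = c then (1 : ℝ) else 0)
    (φ : V →ₗ[ℝ] V →ₗ[ℝ] V →ₗ[ℝ] ℝ)
    (hφ : ∀ x : V, MemS2 L (fun y z => φ x y z)) :
    ∃! PRTQ : (V → V → V → ℝ) × (V → V → V → ℝ) × (V →ₗ[ℝ] ℝ) × (V →ₗ[ℝ] ℝ),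
      (∀ x y z, PRTQ.1 x y z = PRTQ.1 y x z ∧ PRTQ.1 x y z = PRTQ.1 x z y) ∧
      (∀ x y z, PRTQ.2.1 x y z = PRTQ.2.1 x z y) ∧
      (∀ x y z, PRTQ.2.1 x y z + PRTQ.2.1 y z x + PRTQ.2.1 z x y +
        PRTQ.2.1 y x z + PRTQ.2.1 z y x + PRTQ.2.1 x z y = 0) ∧
      (∀ z : V, (∑ a, ∑ b, Linv a b * PRTQ.2.1 (e a) (e b) z) = 0) ∧
      (∀ x y z, φ x y z = PRTQ.1 x y z + PRTQ.2.1 x y z +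
        PRTQ.2.2.1 y * L x z + PRTQ.2.2.1 z * L x y + PRTQ.2.2.2 x * L y z) := by
  classical
  -- skew-symmetry of L
  have hskew : ∀ a b : V, L a b = - L b a := by
    intro a b
    have h := halt (a + b)
    simp only [map_add, LinearMap.add_apply] at h
    rw [halt a, halt b] at h
    linarith
  have hpos : 0 < 2 * n := by omega
  have hv : e ⟨0, hpos⟩ ≠ 0 := e.ne_zero _
  obtain ⟨w, hw⟩ : ∃ w, L (e ⟨0, hpos⟩) w ≠ 0 := by
    by_contra h
    push_neg at h
    exact hv (hnd _ h)
  set y₀ : V := e ⟨0, hpos⟩ with hy₀def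
  set z₀ : V := (L y₀ w)⁻¹ • w with hz₀def
  have hy0 : L y₀ z₀ = 1 := by
    rw [hz₀def, map_smul, smul_eq_mul]
    exact inv_mul_cancel₀ hw
  have hz0 : L z₀ y₀ = -1 := by rw [hskew z₀ y₀, hy0]
  -- the antisymmetric part of φ in its last two slots is Qm ⊗ L
  have hQanti : ∀ x y z, φ x y z - φ x z y = 2 * Statement1Aux.Qm φ y₀ z₀ x * L y z := by
    intro x y z
    obtain ⟨Ps, q, hPs, hdec0⟩ := hφ x
    have hdec : ∀ y z, φ x y z = Ps y z + q * L y z := hdec0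
    have hQx : Statement1Aux.Qm φ y₀ z₀ x = q := by
      simp only [Statement1Aux.Qm, LinearMap.smul_apply, LinearMap.sub_apply,
        LinearMap.flip_apply, smul_eq_mul]
      rw [hdec y₀ z₀, hdec z₀ y₀, hPs z₀ y₀, hy0, hz0]
      ring
    rw [hQx, hdec y z, hdec z y, hPs z y, hskew z y]
    ring
  set Q : V →ₗ[ℝ] ℝ := Statement1Aux.Qm φ y₀ z₀ with hQdef
  set c : ℝ := ((2 * n : ℝ) + 1)⁻¹ with hc
  have hcne : ((2 * n : ℝ) + 1) ≠ 0 := by positivity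
  set T : V →ₗ[ℝ] ℝ := Statement1Aux.Tm φ e Linv c with hTdef
  have hTapp : ∀ z, T z = c * ∑ a, ∑ b, Linv a b * Statement1Aux.Af φ (e a) (e b) z := by
    intro z
    rw [hTdef]
    simp [Statement1Aux.Tm, LinearMap.sum_apply, LinearMap.smul_apply, smul_eq_mul,
      Statement1Aux.Al_apply]
  -- summation helpers
  have pull : ∀ (r : ℝ) (f : Fin (2*n) → Fin (2*n) → ℝ),
      (∑ a, ∑ b, Linv a b * (r * f a b)) = r * ∑ a, ∑ b, Linv a b * f a b := by
    intro r f
    rw [Finset.mul_sum]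
    refine Finset.sum_congr rfl fun a _ => ?_
    rw [Finset.mul_sum]
    exact Finset.sum_congr rfl fun b _ => by ring
  have lemB : (∑ a, ∑ b, Linv a b * L (e a) (e b)) = (2 * n : ℝ) := by
    rw [Finset.sum_comm]
    have h1 : ∀ b : Fin (2*n), (∑ a, Linv a b * L (e a) (e b)) = 1 := by
      intro b; rw [hinv b b]; simp
    calc (∑ b, ∑ a, Linv a b * L (e a) (e b)) = ∑ _b : Fin (2*n), (1:ℝ) :=
          Finset.sum_congr rfl fun b _ => h1 b
      _ = (2*n : ℝ) := by simp [Finset.card_univ]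
  have lemA : ∀ (f : V →ₗ[ℝ] ℝ) (z : V),
      (∑ a, ∑ b, Linv a b * (f (e b) * L (e a) z)) = f z := by
    intro f z
    have hM : (∑ a, ∑ b, (Linv a b * f (e b)) • (L (e a)) : V →ₗ[ℝ] ℝ) = f := by
      apply e.ext
      intro c'
      simp only [LinearMap.sum_apply, LinearMap.smul_apply, smul_eq_mul]
      rw [Finset.sum_comm]
      have h1 : ∀ b, (∑ a, Linv a b * f (e b) * L (e a) (e c'))
          = f (e b) * (if b = c' then 1 else 0) := by
        intro b
        rw [show (∑ a, Linv a b * f (e b) * L (e a) (e c'))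
            = f (e b) * ∑ a, Linv a b * L (e a) (e c') by
          rw [Finset.mul_sum]; exact Finset.sum_congr rfl fun a _ => by ring]
        rw [hinv b c']
      rw [Finset.sum_congr rfl fun b _ => h1 b]
      simp
    calc (∑ a, ∑ b, Linv a b * (f (e b) * L (e a) z))
        = (∑ a, ∑ b, ((Linv a b * f (e b)) • (L (e a)) : V →ₗ[ℝ] ℝ) z) := by
          refine Finset.sum_congr rfl fun a _ => Finset.sum_congr rfl fun b _ => ?_
          simp only [LinearMap.smul_apply, smul_eq_mul]; ring
      _ = ((∑ a, ∑ b, (Linv a b * f (e b)) • (L (e a)) : V →ₗ[ℝ] ℝ)) z := by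
          simp [LinearMap.sum_apply]
      _ = f z := by rw [hM]
  have expand : ∀ (R : V → V → V → ℝ) (f : V →ₗ[ℝ] ℝ) (z : V),
      (∀ z', (∑ a, ∑ b, Linv a b * R (e a) (e b) z') = 0) →
      (∑ a, ∑ b, Linv a b * (R (e a) (e b) z + f (e b) * L (e a) z + f z * L (e a) (e b)))
        = ((2 * n : ℝ) + 1) * f z := by
    intro R f z htr
    have split : (∑ a, ∑ b, Linv a b * (R (e a) (e b) z + f (e b) * L (e a) z
          + f z * L (e a) (e b)))
        = (∑ a, ∑ b, Linv a b * R (e a) (e b) z)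
          + (∑ a, ∑ b, Linv a b * (f (e b) * L (e a) z))
          + (∑ a, ∑ b, Linv a b * (f z * L (e a) (e b))) := by
      rw [← Finset.sum_add_distrib, ← Finset.sum_add_distrib]
      refine Finset.sum_congr rfl fun a _ => ?_
      rw [← Finset.sum_add_distrib, ← Finset.sum_add_distrib]
      exact Finset.sum_congr rfl fun b _ => by ring
    have hp := pull (f z) (fun a b => L (e a) (e b))
    rw [split, htr z, lemA f z, hp, lemB]
    ring
  -- witness properties
  have wP : ∀ x y z, Statement1Aux.Pf φ x y z = Statement1Aux.Pf φ y x z ∧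
      Statement1Aux.Pf φ x y z = Statement1Aux.Pf φ x z y := by
    intro x y z
    constructor <;> (simp only [Statement1Aux.Pf]; ring)
  have wRs : ∀ x y z, Statement1Aux.Rf φ L T x y z = Statement1Aux.Rf φ L T x z y := by
    intro x y z
    simp only [Statement1Aux.Rf, Statement1Aux.Af, Statement1Aux.Pf]
    ring
  have wR6 : ∀ x y z, Statement1Aux.Rf φ L T x y z + Statement1Aux.Rf φ L T y z x
      + Statement1Aux.Rf φ L T z x y + Statement1Aux.Rf φ L T y x z
      + Statement1Aux.Rf φ L T z y x + Statement1Aux.Rf φ L T x z y = 0 := by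
    intro x y z
    simp only [Statement1Aux.Rf, Statement1Aux.Af, Statement1Aux.Pf]
    linear_combination (-2 * T y) * hskew x z + (-2 * T x) * hskew y z
      + (-2 * T z) * hskew x y
  have hTr : ∀ z, (∑ a, ∑ b, Linv a b * Statement1Aux.Rf φ L T (e a) (e b) z) = 0 := by
    intro z
    have hAf : (∑ a, ∑ b, Linv a b * Statement1Aux.Af φ (e a) (e b) z)
        = ((2*n:ℝ)+1) * T z := by
      rw [hTapp z, hc, ← mul_assoc, mul_inv_cancel₀ hcne, one_mul]
    have split : (∑ a, ∑ b, Linv a b * Statement1Aux.Rf φ L T (e a) (e b) z)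
        = (∑ a, ∑ b, Linv a b * Statement1Aux.Af φ (e a) (e b) z)
          - (∑ a, ∑ b, Linv a b * (T (e b) * L (e a) z))
          - (∑ a, ∑ b, Linv a b * (T z * L (e a) (e b))) := by
      rw [← Finset.sum_sub_distrib, ← Finset.sum_sub_distrib]
      refine Finset.sum_congr rfl fun a _ => ?_
      rw [← Finset.sum_sub_distrib, ← Finset.sum_sub_distrib]
      refine Finset.sum_congr rfl fun b _ => ?_
      simp only [Statement1Aux.Rf]; ring
    have hp := pull (T z) (fun a b => L (e a) (e b))
    rw [split, hAf, lemA T z, hp, lemB]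
    ring
  have wDec : ∀ x y z, φ x y z = Statement1Aux.Pf φ x y z + Statement1Aux.Rf φ L T x y z
      + T y * L x z + T z * L x y + Q x * L y z := by
    intro x y z
    have h := hQanti x y z
    simp only [Statement1Aux.Rf, Statement1Aux.Af, Statement1Aux.Pf]
    linear_combination (1/2) * h
  refine ⟨⟨Statement1Aux.Pf φ, Statement1Aux.Rf φ L T, T, Q⟩, ⟨wP, wRs, wR6, hTr, wDec⟩, ?_⟩
  rintro ⟨P1, R1, T1, Q1⟩ ⟨hP1, hR1s, hR16, hR1t, hdec1⟩
  -- Q is unique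
  have hQ1 : ∀ x, Q1 x = Q x := by
    intro x
    have h1 := hdec1 x y₀ z₀
    have h2 := hdec1 x z₀ y₀
    have h3 := wDec x y₀ z₀
    have h4 := wDec x z₀ y₀
    rw [hy0] at h1 h3
    rw [hz0] at h2 h4
    have p1 := (hP1 x y₀ z₀).2
    have r1 := hR1s x y₀ z₀
    have p2 := (wP x y₀ z₀).2
    have r2 := wRs x y₀ z₀
    linarith [h1, h2, h3, h4, p1, r1, p2, r2]
  have hQeq : Q1 = Q := LinearMap.ext hQ1
  have heq' : ∀ x y z, P1 x y z + R1 x y z + T1 y * L x z + T1 z * L x y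
      = Statement1Aux.Pf φ x y z + Statement1Aux.Rf φ L T x y z + T y * L x z + T z * L x y := by
    intro x y z
    have h1 := hdec1 x y z
    have h2 := wDec x y z
    rw [hQ1 x] at h1
    linarith
  -- P is unique
  have hPeq : ∀ x y z, P1 x y z = Statement1Aux.Pf φ x y z := by
    intro x y z
    have g1 := heq' x y z
    have g2 := heq' y z x
    have g3 := heq' z x y
    have g4 := heq' y x z
    have g5 := heq' z y x
    have g6 := heq' x z y
    have q1 : P1 y z x = P1 x y z := (hP1 y z x).2.trans (hP1 x y z).1.symm
    have q2 : P1 z x y = P1 x y z := (hP1 z x y).1.trans (hP1 x y z).2.symm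
    have q3 : P1 y x z = P1 x y z := (hP1 x y z).1.symm
    have q4 : P1 z y x = P1 x y z := (hP1 z y x).1.trans q1
    have q5 : P1 x z y = P1 x y z := (hP1 x y z).2.symm
    have u1 : Statement1Aux.Pf φ y z x = Statement1Aux.Pf φ x y z :=
      (wP y z x).2.trans (wP x y z).1.symm
    have u2 : Statement1Aux.Pf φ z x y = Statement1Aux.Pf φ x y z :=
      (wP z x y).1.trans (wP x y z).2.symm
    have u3 : Statement1Aux.Pf φ y x z = Statement1Aux.Pf φ x y z := (wP x y z).1.symm
    have u4 : Statement1Aux.Pf φ z y x = Statement1Aux.Pf φ x y z := (wP z y x).1.trans u1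
    have u5 : Statement1Aux.Pf φ x z y = Statement1Aux.Pf φ x y z := (wP x y z).2.symm
    have m1 : T1 y * L z x = -(T1 y * L x z) := by rw [hskew z x]; ring
    have m2 : T1 x * L z y = -(T1 x * L y z) := by rw [hskew z y]; ring
    have m3 : T1 z * L y x = -(T1 z * L x y) := by rw [hskew y x]; ring
    have m4 : T y * L z x = -(T y * L x z) := by rw [hskew z x]; ring
    have m5 : T x * L z y = -(T x * L y z) := by rw [hskew z y]; ring
    have m6 : T z * L y x = -(T z * L x y) := by rw [hskew y x]; ring
    have s1 := hR16 x y z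
    have s2 := wR6 x y z
    linarith [g1, g2, g3, g4, g5, g6, q1, q2, q3, q4, q5, u1, u2, u3, u4, u5,
      m1, m2, m3, m4, m5, m6, s1, s2]
  -- T is unique
  have hReq' : ∀ x y z, R1 x y z + T1 y * L x z + T1 z * L x y
      = Statement1Aux.Rf φ L T x y z + T y * L x z + T z * L x y := by
    intro x y z
    have h := heq' x y z
    have hp := hPeq x y z
    linarith
  have hTeq : ∀ z, T1 z = T z := by
    intro z
    have hL := expand R1 T1 z hR1t
    have hR := expand (Statement1Aux.Rf φ L T) T z hTr
    have hE : (∑ a, ∑ b, Linv a b * (R1 (e a) (e b) z + T1 (e b) * L (e a) z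
          + T1 z * L (e a) (e b)))
        = (∑ a, ∑ b, Linv a b * (Statement1Aux.Rf φ L T (e a) (e b) z
          + T (e b) * L (e a) z + T z * L (e a) (e b))) :=
      Finset.sum_congr rfl fun a _ => Finset.sum_congr rfl fun b _ => by
        rw [hReq' (e a) (e b) z]
    have hfin : ((2*n:ℝ)+1) * T1 z = ((2*n:ℝ)+1) * T z := hL.symm.trans (hE.trans hR)
    exact mul_left_cancel₀ hcne hfin
  have hTeq' : T1 = T := LinearMap.ext hTeq
  -- R is unique
  have hRe : ∀ x y z, R1 x y z = Statement1Aux.Rf φ L T x y z := by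
    intro x y z
    have h := hReq' x y z
    rw [hTeq y, hTeq z] at h
    linarith
  have hPfun : P1 = Statement1Aux.Pf φ := by funext x y z; exact hPeq x y z
  have hRfun : R1 = Statement1Aux.Rf φ L T := by funext x y z; exact hRe x y z
  simp only [Prod.mk.injEq]
  exact ⟨hPfun, hRfun, hTeq', hQeq⟩
end

section
/- Let V be a 2-dimensional real symplectic vector space with symplectic form L. The linear map Σ: V*⊗V*⊗V* → V* given by Σ(φ)_c = L^{ab}(φ_{abc} − φ_{cab}) is surjective and its kernel equals Sym³(V*) ⊕ { Q_a L_{bc} + Q_b L_{ac} + Q_c L_{ab} : Q ∈ V* }. -/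
open scoped BigOperators

set_option maxHeartbeats 2000000 in
/-- Let `V` be a 2-dimensional real symplectic vector space with
symplectic form `L` and inverse form `L^{ab}`.  The map
`Σ(φ)_c = L^{ab}(φ_{abc} − φ_{cab})` from `V*⊗V*⊗V*` to `V*` is surjective and its
kernel equals `Sym³(V*) ⊕ { Q_a L_{bc} + Q_b L_{ac} + Q_c L_{ab} : Q ∈ V* }`. -/
theorem statement2 {V : Type*} [AddCommGroup V] [Module ℝ V] [FiniteDimensional ℝ V]
    (hdim : Module.finrank ℝ V = 2)
    (L : V →ₗ[ℝ] V →ₗ[ℝ] ℝ)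
    (halt : ∀ x : V, L x x = 0)
    (hnd : ∀ x : V, (∀ y : V, L x y = 0) → x = 0)
    (e : Module.Basis (Fin 2) ℝ V)
    (Linv : Fin 2 → Fin 2 → ℝ)
    (hinv : ∀ b c, (∑ a, Linv a b * L (e a) (e c)) = if b = c then (1 : ℝ) else 0) :
    -- surjectivity of Σ
    ((∀ ψ : V →ₗ[ℝ] ℝ, ∃ φ : V →ₗ[ℝ] V →ₗ[ℝ] V →ₗ[ℝ] ℝ,
        ∀ z : V, (∑ a, ∑ b, Linv a b * (φ (e a) (e b) z - φ z (e a) (e b))) = ψ z) ∧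
    -- kernel description
    (∀ φ : V →ₗ[ℝ] V →ₗ[ℝ] V →ₗ[ℝ] ℝ,
      (∀ z : V, (∑ a, ∑ b, Linv a b * (φ (e a) (e b) z - φ z (e a) (e b))) = 0) ↔
      ∃ (P : V → V → V → ℝ) (Q : V →ₗ[ℝ] ℝ),
        (∀ x y z, P x y z = P y x z ∧ P x y z = P x z y) ∧
        ∀ x y z, φ x y z = P x y z + Q x * L y z + Q y * L x z + Q z * L x y)) := by
  classical
  have hskew : ∀ x y : V, L y x = - L x y := by
    intro x y
    have h := halt (x + y)
    simp [map_add, halt] at h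
    linarith
  have hco : ∀ z : V, ∃ a b : ℝ, z = a • e 0 + b • e 1 := fun z =>
    ⟨e.repr z 0, e.repr z 1, by simpa only [Fin.sum_univ_two] using (e.sum_repr z).symm⟩
  have hL00 : L (e 0) (e 0) = 0 := halt _
  have hL11 : L (e 1) (e 1) = 0 := halt _
  have hL10 : L (e 1) (e 0) = - L (e 0) (e 1) := hskew _ _
  have h00 := hinv 0 0
  have h01 := hinv 0 1
  have h10 := hinv 1 0
  have h11 := hinv 1 1
  simp [Fin.sum_univ_two, hL00, hL11, hL10] at h00 h01 h10 h11
  have hl : L (e 0) (e 1) ≠ 0 := by intro h; rw [h] at h00; simp at h00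
  have e00 : Linv 0 0 = 0 := h01.resolve_right hl
  have e11 : Linv 1 1 = 0 := h10.resolve_right hl
  have e01 : Linv 0 1 = 1 / L (e 0) (e 1) := by
    field_simp
    linarith [h11]
  have e10 : Linv 1 0 = -(1 / L (e 0) (e 1)) := by
    field_simp
    linarith [h00]
  constructor
  · -- surjectivity
    intro ψ
    refine ⟨(1/3 : ℝ) • (L.compr₂ ((LinearMap.lsmul ℝ (V →ₗ[ℝ] ℝ)).flip ψ)), ?_⟩
    intro z
    obtain ⟨z0, z1, rfl⟩ := hco z
    simp only [Fin.sum_univ_two, e00, e11, e01, e10, LinearMap.smul_apply,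
      LinearMap.compr₂_apply, LinearMap.flip_apply, LinearMap.lsmul_apply,
      map_add, map_smul, LinearMap.add_apply, smul_eq_mul, hL00, hL11, hL10]
    field_simp
    ring
  · -- kernel
    intro φ
    constructor
    · intro h
      have key : ∀ w : V, φ (e 0) (e 1) w - φ (e 1) (e 0) w
          = φ w (e 0) (e 1) - φ w (e 1) (e 0) := by
        intro w
        have h' := h w
        simp only [Fin.sum_univ_two, e00, e11, e01, e10, zero_mul, add_zero,
          zero_add] at h'
        field_simp at h'
        linarith
      set Q : V →ₗ[ℝ] ℝ := (1/(2 * L (e 0) (e 1))) • (φ (e 0) (e 1) - φ (e 1) (e 0))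
        with hQdef
      have hQ' : ∀ w : V, Q w
          = 1/(2 * L (e 0) (e 1)) * (φ (e 0) (e 1) w - φ (e 1) (e 0) w) := by
        intro w
        simp [hQdef, smul_eq_mul]
      have hQ : ∀ w : V, Q w
          = 1/(2 * L (e 0) (e 1)) * (φ w (e 0) (e 1) - φ w (e 1) (e 0)) := by
        intro w
        rw [hQ', key]
      refine ⟨fun x y z => φ x y z - Q x * L y z - Q y * L x z - Q z * L x y, Q,
        ?_, ?_⟩
      · intro x y z
        constructor
        · simp only
          obtain ⟨x0, x1, rfl⟩ := hco x
          obtain ⟨y0, y1, rfl⟩ := hco y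
          rw [hQ' z]
          simp only [map_add, map_smul, LinearMap.add_apply, LinearMap.smul_apply,
            smul_eq_mul, hL00, hL11, hL10]
          field_simp
          ring
        · simp only
          obtain ⟨y0, y1, rfl⟩ := hco y
          obtain ⟨z0, z1, rfl⟩ := hco z
          rw [hQ x]
          simp only [map_add, map_smul, LinearMap.add_apply, LinearMap.smul_apply,
            smul_eq_mul, hL00, hL11, hL10]
          field_simp
          ring
      · intro x y z
        simp only
        ring
    · rintro ⟨P, Q, hsym, hrep⟩ z
      have p1 : P z (e 0) (e 1) = P (e 0) (e 1) z := by
        rw [(hsym z (e 0) (e 1)).1, (hsym (e 0) z (e 1)).2]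
      have p2 : P z (e 1) (e 0) = P (e 1) (e 0) z := by
        rw [(hsym z (e 1) (e 0)).1, (hsym (e 1) z (e 0)).2]
      rw [Fin.sum_univ_two, Fin.sum_univ_two, Fin.sum_univ_two,
        hrep (e 0) (e 1) z, hrep (e 1) (e 0) z, hrep z (e 0) (e 1), hrep z (e 1) (e 0),
        p1, p2, e00, e11, e01, e10, hL10, hskew (e 0) z, hskew (e 1) z]
      field_simp
      ring
end

section
/- Let 𝔤₋ = 𝔤₋₂ ⊕ 𝔤₋₁ be the Heisenberg Lie algebra of dimension 2n+1 (with dim 𝔤₋₂ = 1, dim 𝔤₋₁ = 2n, and the bracket Λ²𝔤₋₁ → 𝔤₋₂ a nondegenerate symplectic form), and let 𝕍 be a finite-dimensional representation of 𝔤₋. If n ≥ 2, then for any linear map φ: 𝔤₋ → 𝕍 such that (∂φ)(X∧Y) = 0 for all X, Y ∈ 𝔤₋₁, one has (∂φ)(ω) = 0 for all ω ∈ Λ²𝔤₋, where (∂φ)(X∧Y) = φ([X,Y]) − Xφ(Y) + Yφ(X). -/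
/-- Let `𝔤₋ = 𝔤₋₂ ⊕ 𝔤₋₁` be the Heisenberg Lie algebra of dimension
`2n+1` (`𝔤₋₂` one-dimensional and central, the bracket `Λ²𝔤₋₁ → 𝔤₋₂` nondegenerate),
`n ≥ 2`, and let `𝕍` be a finite-dimensional representation.  If a linear map
`φ : 𝔤₋ → 𝕍` satisfies `(∂φ)(X∧Y) = 0` for all `X, Y ∈ 𝔤₋₁`, then `(∂φ)(ω) = 0`
for all `ω ∈ Λ²𝔤₋`, where `(∂φ)(X∧Y) = φ([X,Y]) − X·φ(Y) + Y·φ(X)`. -/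
theorem statement3 {g : Type*} [LieRing g] [LieAlgebra ℝ g] [FiniteDimensional ℝ g]
    {𝕍 : Type*} [AddCommGroup 𝕍] [Module ℝ 𝕍] [FiniteDimensional ℝ 𝕍]
    [LieRingModule g 𝕍] [LieModule ℝ g 𝕍]
    (n : ℕ) (hn : 2 ≤ n)
    (g1 g2 : Submodule ℝ g)
    (hcompl : IsCompl g1 g2)
    (hdim1 : Module.finrank ℝ g1 = 2 * n)
    (hdim2 : Module.finrank ℝ g2 = 1)
    (hcentral : ∀ z ∈ g2, ∀ w : g, ⁅z, w⁆ = 0)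
    (hbracket : ∀ x ∈ g1, ∀ y ∈ g1, ⁅x, y⁆ ∈ g2)
    (hnondeg : ∀ x ∈ g1, x ≠ 0 → ∃ y ∈ g1, ⁅x, y⁆ ≠ (0 : g))
    (φ : g →ₗ[ℝ] 𝕍)
    (hφ : ∀ x ∈ g1, ∀ y ∈ g1, φ ⁅x, y⁆ - ⁅x, φ y⁆ + ⁅y, φ x⁆ = 0) :
    ∀ x y : g, φ ⁅x, y⁆ - ⁅x, φ y⁆ + ⁅y, φ x⁆ = 0 := by
  classical
  set c : g → g → 𝕍 := fun x y => φ ⁅x, y⁆ - ⁅x, φ y⁆ + ⁅y, φ x⁆ with hc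
  show ∀ x y : g, c x y = 0
  have hφ' : ∀ x ∈ g1, ∀ y ∈ g1, c x y = 0 := hφ
  -- basic algebraic properties of c
  have hskew : ∀ x y : g, c y x = -c x y := by
    intro x y
    simp only [hc]
    rw [← lie_skew x y, map_neg]
    abel
  have hzero1 : ∀ y : g, c 0 y = 0 := by
    intro y; simp [hc]
  have hself : ∀ x : g, c x x = 0 := by
    intro x; simp [hc]
  have hsmul1 : ∀ (r : ℝ) (x y : g), c (r • x) y = r • c x y := by
    intro r x y
    simp only [hc, smul_lie, lie_smul, map_smul, smul_sub, smul_add]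
  have hsmul2 : ∀ (r : ℝ) (x y : g), c x (r • y) = r • c x y := by
    intro r x y
    simp only [hc, smul_lie, lie_smul, map_smul, smul_sub, smul_add]
  have hadd2 : ∀ x y y' : g, c x (y + y') = c x y + c x y' := by
    intro x y y'
    simp only [hc, add_lie, lie_add, map_add]
    abel
  -- the expression of φ on brackets of g1 elements
  have e : ∀ p ∈ g1, ∀ q ∈ g1, φ ⁅p, q⁆ = ⁅p, φ q⁆ - ⁅q, φ p⁆ := by
    intro p hp q hq
    have h := hφ p hp q hq
    rw [← sub_eq_zero]
    calc φ ⁅p, q⁆ - (⁅p, φ q⁆ - ⁅q, φ p⁆) = φ ⁅p, q⁆ - ⁅p, φ q⁆ + ⁅q, φ p⁆ := by abel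
      _ = 0 := h
  -- restricted cocycle identity
  have hcen : ∀ p ∈ g1, ∀ q ∈ g1, ∀ r : g, ⁅(⁅p, q⁆ : g), r⁆ = 0 := fun p hp q hq r =>
    hcentral _ (hbracket p hp q hq) r
  have hrel : ∀ x ∈ g1, ∀ y ∈ g1, ∀ z ∈ g1,
      c ⁅x, y⁆ z - c ⁅x, z⁆ y + c ⁅y, z⁆ x = 0 := by
    intro x hx y hy z hz
    simp only [hc]
    rw [hcen x hx y hy z, hcen x hx z hz y, hcen y hy z hz x, map_zero,
      e x hx y hy, e x hx z hz, e y hy z hz, lie_lie x y (φ z), lie_lie x z (φ y),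
      lie_lie y z (φ x)]
    simp only [lie_sub]
    abel
  -- produce a, b ∈ g1 with ⁅a,b⁆ ≠ 0
  have hg1nebot : g1 ≠ ⊥ := by
    intro h
    rw [h, finrank_bot ℝ g] at hdim1
    omega
  obtain ⟨a, hamem, hane⟩ := Submodule.exists_mem_ne_zero_of_ne_bot hg1nebot
  obtain ⟨b, hbmem, hab⟩ := hnondeg a hamem hane
  set Z : g := ⁅a, b⁆ with hZ
  have hZ2 : Z ∈ g2 := hbracket a hamem b hbmem
  -- every element of g2 is a multiple of Z
  have hspan : ∀ z ∈ g2, ∃ r : ℝ, z = r • Z := by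
    have h1 : (⟨Z, hZ2⟩ : g2) ≠ 0 := by
      intro h
      exact hab (by simpa [hZ] using congrArg Subtype.val h)
    have := (finrank_eq_one_iff_of_nonzero' (⟨Z, hZ2⟩ : g2) h1).mp hdim2
    intro z hz
    obtain ⟨r, hr⟩ := this ⟨z, hz⟩
    exact ⟨r, by simpa using (congrArg Subtype.val hr).symm⟩
  -- find u ∈ g1, nonzero, with ⁅a,u⁆ = ⁅b,u⁆ = 0
  let T : g1 →ₗ[ℝ] g2 × g2 :=
    LinearMap.prod
      (LinearMap.codRestrict g2 ((LieModule.toEnd ℝ g g a) ∘ₗ g1.subtype)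
        fun x => hbracket a hamem x x.2)
      (LinearMap.codRestrict g2 ((LieModule.toEnd ℝ g g b) ∘ₗ g1.subtype)
        fun x => hbracket b hbmem x x.2)
  obtain ⟨u, huker, hune⟩ : ∃ u ∈ LinearMap.ker T, u ≠ 0 := by
    apply Submodule.exists_mem_ne_zero_of_ne_bot
    intro h
    have h1 := LinearMap.finrank_range_add_finrank_ker T
    have h2 : Module.finrank ℝ (LinearMap.range T) ≤ Module.finrank ℝ (g2 × g2) :=
      Submodule.finrank_le _
    rw [h, finrank_bot ℝ g1] at h1
    rw [Module.finrank_prod, hdim2] at h2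
    rw [hdim1] at h1
    omega
  have hau : ⁅a, (u : g)⁆ = 0 := by
    have := congrArg (fun p => (p.1 : g)) (LinearMap.mem_ker.mp huker)
    exact this
  have hbu : ⁅b, (u : g)⁆ = 0 := by
    have := congrArg (fun p => (p.2 : g)) (LinearMap.mem_ker.mp huker)
    exact this
  have hucoe : (u : g) ≠ 0 := by
    simpa [Submodule.coe_eq_zero] using hune
  -- find y with ⁅u,y⁆ ≠ 0 and correct it to v orthogonal to a and b
  obtain ⟨y, hymem, huy⟩ := hnondeg (u : g) u.2 hucoe
  obtain ⟨t, ht⟩ := hspan ⁅a, y⁆ (hbracket a hamem y hymem)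
  obtain ⟨μ, hμ⟩ := hspan ⁅b, y⁆ (hbracket b hbmem y hymem)
  set v : g := y - t • b + μ • a with hv
  have hvmem : v ∈ g1 := by
    exact g1.add_mem (g1.sub_mem hymem (g1.smul_mem t hbmem)) (g1.smul_mem μ hamem)
  have hav : ⁅a, v⁆ = 0 := by
    simp only [hv, lie_add, lie_sub, lie_smul, lie_self, smul_zero, add_zero]
    rw [ht, ← hZ]; abel
  have hbv : ⁅b, v⁆ = 0 := by
    have hba : ⁅b, a⁆ = -Z := by rw [hZ, ← lie_skew]
    simp only [hv, lie_add, lie_sub, lie_smul, lie_self, smul_zero, sub_zero]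
    rw [hμ, hba]
    simp [smul_neg]
  have huv : ⁅(u : g), v⁆ ≠ 0 := by
    have hua : ⁅(u : g), a⁆ = 0 := by rw [← lie_skew, hau, neg_zero]
    have hub : ⁅(u : g), b⁆ = 0 := by rw [← lie_skew, hbu, neg_zero]
    simp only [hv, lie_add, lie_sub, lie_smul, hua, hub, smul_zero, add_zero, sub_zero]
    exact huy
  -- c Z a = 0 and c Z b = 0
  obtain ⟨ρ, hρ⟩ := hspan ⁅(u : g), v⁆ (hbracket _ u.2 _ hvmem)
  have hρne : ρ ≠ 0 := by
    intro h; apply huv; rw [hρ, h, zero_smul]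
  have hcZ : ∀ w : g, (⁅(u : g), w⁆ = 0) → (⁅v, w⁆ = 0) → w ∈ g1 → c Z w = 0 := by
    intro w h1 h2 hw
    have := hrel (u : g) u.2 v hvmem w hw
    rw [h1, h2, hzero1, hzero1, hρ, hsmul1] at this
    have h3 : ρ • c Z w = 0 := by
      have : ρ • c Z w - 0 + 0 = ρ • c Z w := by abel
      rw [← this]; assumption
    rcases smul_eq_zero.mp h3 with h | h
    · exact absurd h hρne
    · exact h
  have hva : ⁅v, a⁆ = 0 := by rw [← lie_skew, hav, neg_zero]
  have hvb : ⁅v, b⁆ = 0 := by rw [← lie_skew, hbv, neg_zero]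
  have hua : ⁅(u : g), a⁆ = 0 := by rw [← lie_skew, hau, neg_zero]
  have hub : ⁅(u : g), b⁆ = 0 := by rw [← lie_skew, hbu, neg_zero]
  have hcZa : c Z a = 0 := hcZ a hua hva hamem
  have hcZb : c Z b = 0 := hcZ b hub hvb hbmem
  -- c Z w = 0 for all w ∈ g1
  have hfg1 : ∀ w ∈ g1, c Z w = 0 := by
    intro w hw
    obtain ⟨t', ht'⟩ := hspan ⁅a, w⁆ (hbracket a hamem w hw)
    obtain ⟨μ', hμ'⟩ := hspan ⁅b, w⁆ (hbracket b hbmem w hw)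
    have := hrel a hamem b hbmem w hw
    rw [← hZ, ht', hμ', hsmul1, hsmul1, hcZa, hcZb, smul_zero, smul_zero] at this
    have h3 : c Z w - 0 + 0 = c Z w := by abel
    rw [h3] at this
    exact this
  -- decomposition of g
  have hdecomp : ∀ w : g, ∃ w1 ∈ g1, ∃ w2 ∈ g2, w = w1 + w2 := by
    intro w
    have hw : w ∈ g1 ⊔ g2 := by rw [hcompl.sup_eq_top]; trivial
    rcases Submodule.mem_sup.mp hw with ⟨w1, h1, w2, h2, h⟩
    exact ⟨w1, h1, w2, h2, h.symm⟩
  -- c z w = 0 for z ∈ g2, any w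
  have hB : ∀ z ∈ g2, ∀ w : g, c z w = 0 := by
    intro z hz w
    obtain ⟨r, hr⟩ := hspan z hz
    obtain ⟨w1, hw1, w2, hw2, hw⟩ := hdecomp w
    obtain ⟨s, hs⟩ := hspan w2 hw2
    rw [hr, hw, hsmul1, hadd2, hfg1 w1 hw1, hs, hsmul2, hself, smul_zero, zero_add,
      smul_zero]
  -- conclusion
  intro x y
  obtain ⟨x1, hx1, x2, hx2, hx⟩ := hdecomp x
  obtain ⟨y1, hy1, y2, hy2, hy⟩ := hdecomp y
  have hadd1 : ∀ p q r : g, c (p + q) r = c p r + c q r := by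
    intro p q r
    rw [hskew r (p + q), hadd2, hskew p r, hskew q r]
    abel
  rw [hx, hy, hadd1, hadd2, hadd2, hφ' x1 hx1 y1 hy1, hB x2 hx2, hB x2 hx2,
    hskew y2 x1, hB y2 hy2]
  abel
end

section
/- Let ∇_H be a partial connection on a vector bundle E over a 3-dimensional contact manifold. Then ∇_H extends to a unique connection ∇ on E that is flat in the contact directions, i.e. ∇_X∇_Yσ − ∇_Y∇_Xσ = ∇_{[X,Y]}σ for all sections X, Y of the contact distribution H and all sections σ of E. -/
/-- (Algebraic model of a 3-dimensional contact manifold: `A` = smooth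
functions, `𝔛 = Der(A)` = vector fields, the contact distribution `H` spanned by a
Darboux frame `X₀, Y₀` such that `X₀, Y₀, [X₀,Y₀]` freely generate `𝔛`.)
Any partial connection `∇_H` on a module `E` extends to a unique connection `∇` on `E`
that is flat in the contact directions:
`∇_X ∇_Y σ − ∇_Y ∇_X σ = ∇_{[X,Y]} σ` for all `X, Y ∈ H` and all `σ`. -/
theorem statement8 {A : Type*} [CommRing A] [Algebra ℝ A]
    {E : Type*} [AddCommGroup E] [Module ℝ E] [Module A E] [IsScalarTower ℝ A E]
    (H : Submodule A (Derivation ℝ A A))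
    (X0 Y0 : H)
    -- `X₀, Y₀, [X₀,Y₀]` form a frame of the vector fields:
    (hframe : ∀ W : Derivation ℝ A A, ∃! abc : A × A × A,
      W = abc.1 • (X0 : Derivation ℝ A A) + abc.2.1 • (Y0 : Derivation ℝ A A) +
        abc.2.2 • ⁅(X0 : Derivation ℝ A A), (Y0 : Derivation ℝ A A)⁆)
    -- `H` is spanned by `X₀, Y₀` (rank 2) and is a contact distribution:
    (hHspan : ∀ W ∈ H, ∃ a b : A,
      W = a • (X0 : Derivation ℝ A A) + b • (Y0 : Derivation ℝ A A))
    (hcontact : ⁅(X0 : Derivation ℝ A A), (Y0 : Derivation ℝ A A)⁆ ∉ H)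
    -- a partial connection on `E`:
    (CnH : H → E →ₗ[ℝ] E)
    (hHadd : ∀ X Y : H, CnH (X + Y) = CnH X + CnH Y)
    (hHlin : ∀ (a : A) (X : H) (e : E), CnH (a • X) e = a • CnH X e)
    (hHleib : ∀ (X : H) (a : A) (e : E),
      CnH X (a • e) = (X : Derivation ℝ A A) a • e + a • CnH X e) :
    ∃! Cn : Derivation ℝ A A → E →ₗ[ℝ] E,
      -- `∇` is a connection:
      ((∀ X Y, Cn (X + Y) = Cn X + Cn Y) ∧
       (∀ (a : A) (X) (e : E), Cn (a • X) e = a • Cn X e) ∧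
       (∀ (X) (a : A) (e : E), Cn X (a • e) = X a • e + a • Cn X e)) ∧
      -- `∇` extends `∇_H`:
      (∀ X : H, Cn (X : Derivation ℝ A A) = CnH X) ∧
      -- `∇` is flat in the contact directions:
      (∀ X ∈ H, ∀ Y ∈ H, ∀ σ : E,
        Cn X (Cn Y σ) - Cn Y (Cn X σ) = Cn ⁅X, Y⁆ σ) := by
  classical
  set X : Derivation ℝ A A := (X0 : Derivation ℝ A A) with hXdef
  set Y : Derivation ℝ A A := (Y0 : Derivation ℝ A A) with hYdef
  set T : Derivation ℝ A A := ⁅X, Y⁆ with hTdef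
  choose dec hdec0 hdecu0 using hframe
  have hdec : ∀ W, W = (dec W).1 • X + (dec W).2.1 • Y + (dec W).2.2 • T := hdec0
  have hdecu : ∀ W (abc : A × A × A),
      W = abc.1 • X + abc.2.1 • Y + abc.2.2 • T → abc = dec W := hdecu0
  set P : E →ₗ[ℝ] E := CnH X0 with hPdef
  set Q : E →ₗ[ℝ] E := CnH Y0 with hQdef
  set Dm : E →ₗ[ℝ] E := P ∘ₗ Q - Q ∘ₗ P with hDmdef
  set Cn : Derivation ℝ A A → E →ₗ[ℝ] E :=
    fun W => (dec W).1 • P + (dec W).2.1 • Q + (dec W).2.2 • Dm with hCndef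
  -- basic dec computations
  have hdec_add : ∀ W W', dec (W + W') = dec W + dec W' := by
    intro W W'
    refine (hdecu _ _ ?_).symm
    conv_lhs => rw [hdec W, hdec W']
    simp only [Prod.fst_add, Prod.snd_add, add_smul]
    abel
  have hdec_smul : ∀ (a : A) W, dec (a • W) = a • dec W := by
    intro a W
    refine (hdecu _ _ ?_).symm
    conv_lhs => rw [hdec W]
    simp only [Prod.smul_fst, Prod.smul_snd, smul_eq_mul, smul_add, smul_smul]
  have hdec_sub : ∀ W W', dec (W - W') = dec W - dec W' := by
    intro W W'
    refine (hdecu _ _ ?_).symm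
    conv_lhs => rw [hdec W, hdec W']
    simp only [Prod.fst_sub, Prod.snd_sub, sub_smul]
    abel
  have hdecX : dec X = (1, 0, 0) := (hdecu _ _ (by simp)).symm
  have hdecY : dec Y = (0, 1, 0) := (hdecu _ _ (by simp)).symm
  have hdecT : dec T = (0, 0, 1) := (hdecu _ _ (by simp)).symm
  -- Cn computations
  have hCn_apply : ∀ W e, Cn W e = (dec W).1 • P e + (dec W).2.1 • Q e + (dec W).2.2 • Dm e := by
    intro W e; simp [hCndef]
  have hCnX : Cn X = P := by ext e; simp [hCn_apply, hdecX]
  have hCnY : Cn Y = Q := by ext e; simp [hCn_apply, hdecY]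
  have hCnT : Cn T = Dm := by ext e; simp [hCn_apply, hdecT]
  have hCnadd : ∀ W W', Cn (W + W') = Cn W + Cn W' := by
    intro W W'; ext e
    simp only [hCn_apply, hdec_add, Prod.fst_add, Prod.snd_add, add_smul, LinearMap.add_apply]
    abel
  have hCnsmul : ∀ (a : A) (W) (e : E), Cn (a • W) e = a • Cn W e := by
    intro a W e
    simp only [hCn_apply, hdec_smul, Prod.smul_fst, Prod.smul_snd, smul_eq_mul, mul_smul,
      smul_add]
  have hCnsub : ∀ W W' (e : E), Cn (W - W') e = Cn W e - Cn W' e := by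
    intro W W' e
    simp only [hCn_apply, hdec_sub, Prod.fst_sub, Prod.snd_sub, sub_smul]
    abel
  have hCnneg : ∀ W (e : E), Cn (-W) e = - Cn W e := by
    intro W e
    have := hCnsub 0 W e
    simpa [hCn_apply, (hdecu 0 (0,0,0) (by simp)).symm] using this
  -- Leibniz for Dm
  have hDmleib : ∀ (f : A) (e : E), Dm (f • e) = T f • e + f • Dm e := by
    intro f e
    simp only [hDmdef, LinearMap.sub_apply, LinearMap.comp_apply]
    rw [show Q (f • e) = Y f • e + f • Q e from hHleib Y0 f e,
        show P (f • e) = X f • e + f • P e from hHleib X0 f e,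
        map_add, map_add,
        show P (Y f • e) = X (Y f) • e + Y f • P e from hHleib X0 (Y f) e,
        show Q (X f • e) = Y (X f) • e + X f • Q e from hHleib Y0 (X f) e,
        show P (f • Q e) = X f • Q e + f • P (Q e) from hHleib X0 f (Q e),
        show Q (f • P e) = Y f • P e + f • Q (P e) from hHleib Y0 f (P e),
        show T f = X (Y f) - Y (X f) from rfl]
    module
  -- Leibniz for Cn
  have hCnleib : ∀ (W) (f : A) (e : E), Cn W (f • e) = W f • e + f • Cn W e := by
    intro W f e
    have hWf : W f = (dec W).1 * X f + (dec W).2.1 * Y f + (dec W).2.2 * T f := by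
      conv_lhs => rw [hdec W]
      simp [Derivation.smul_apply, smul_eq_mul]
    rw [hCn_apply, hCn_apply,
        show P (f • e) = X f • e + f • P e from hHleib X0 f e,
        show Q (f • e) = Y f • e + f • Q e from hHleib Y0 f e,
        hDmleib f e, hWf]
    module
  -- Cn extends CnH
  have hCnext : ∀ X' : H, Cn (X' : Derivation ℝ A A) = CnH X' := by
    intro X'
    obtain ⟨a, b, hab⟩ := hHspan X' X'.2
    have hd : dec (X' : Derivation ℝ A A) = (a, b, 0) :=
      (hdecu _ (a, b, 0) (by simpa using hab)).symm
    have hX' : X' = a • X0 + b • Y0 := by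
      apply Subtype.ext
      simpa using hab
    ext e
    rw [hCn_apply, hd, hX', hHadd]
    simp [hHlin, hPdef, hQdef]
  -- curvature
  set Rc : Derivation ℝ A A → Derivation ℝ A A → E → E :=
    fun V W e => Cn V (Cn W e) - Cn W (Cn V e) - Cn ⁅V, W⁆ e with hRcdef
  have lie_smul_left : ∀ (a : A) (V W : Derivation ℝ A A),
      ⁅a • V, W⁆ = a • ⁅V, W⁆ - W a • V := by
    intro a V W
    ext g
    simp only [Derivation.commutator_apply, Derivation.smul_apply, Derivation.sub_apply,
      Derivation.leibniz, smul_eq_mul, map_mul]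
    ring
  have hCnzero : ∀ e : E, Cn 0 e = 0 := by
    intro e
    have h0 : dec (0 : Derivation ℝ A A) = (0, 0, 0) := (hdecu _ (0,0,0) (by simp)).symm
    simp [hCn_apply, h0]
  have hRskew : ∀ V W e, Rc V W e = - Rc W V e := by
    intro V W e
    simp only [hRcdef]
    rw [show ⁅W, V⁆ = -⁅V, W⁆ from (lie_skew W V).symm, hCnneg]
    abel
  have hRsmul1 : ∀ (a : A) V W e, Rc (a • V) W e = a • Rc V W e := by
    intro a V W e
    simp only [hRcdef]
    rw [hCnsmul, hCnsmul, lie_smul_left, hCnsub, hCnsmul, hCnsmul, hCnleib]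
    module
  have hRadd1 : ∀ V V' W e, Rc (V + V') W e = Rc V W e + Rc V' W e := by
    intro V V' W e
    simp only [hRcdef, hCnadd, add_lie, LinearMap.add_apply, map_add]
    abel
  have hRXY : ∀ e, Rc X Y e = 0 := by
    intro e
    simp only [hRcdef, hCnX, hCnY, ← hTdef, hCnT, hDmdef, LinearMap.sub_apply,
      LinearMap.comp_apply]
    abel
  have hRXX : ∀ (V : Derivation ℝ A A) e, Rc V V e = 0 := by
    intro V e
    simp only [hRcdef, lie_self, hCnzero]
    abel
  have hRsmul2 : ∀ (a : A) (V W : Derivation ℝ A A) (e : E),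
      Rc V (a • W) e = a • Rc V W e := by
    intro a V W e
    rw [hRskew, hRsmul1, hRskew W V e]
    simp
  have hRadd2 : ∀ (V W W' : Derivation ℝ A A) (e : E),
      Rc V (W + W') e = Rc V W e + Rc V W' e := by
    intro V W W' e
    rw [hRskew, hRadd1, hRskew W V e, hRskew W' V e]
    abel
  have hRYX : ∀ e : E, Rc Y X e = 0 := by
    intro e
    rw [hRskew, hRXY]
    simp
  have hRH : ∀ V ∈ H, ∀ W ∈ H, ∀ e : E, Rc V W e = 0 := by
    intro V hV W hW e
    obtain ⟨a, b, hab⟩ := hHspan V hV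
    obtain ⟨c, d, hcd⟩ := hHspan W hW
    rw [hab, hcd, hRadd1, hRadd2, hRadd2]
    simp only [hRsmul1, hRsmul2, hRXX, hRXY, hRYX, smul_zero, add_zero]
  -- assemble
  refine ⟨Cn, ⟨⟨hCnadd, hCnsmul, hCnleib⟩, hCnext, ?_⟩, ?_⟩
  · intro V hV W hW σ
    have h0 : Cn V (Cn W σ) - Cn W (Cn V σ) - Cn ⁅V, W⁆ σ = 0 := hRH V hV W hW σ
    exact sub_eq_zero.mp h0
  · rintro Cn' ⟨⟨h1, h2, h3⟩, h4, h5⟩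
    funext W
    ext e
    have hT' : ∀ σ : E, Cn' T σ = Dm σ := by
      intro σ
      have := h5 X X0.2 Y Y0.2 σ
      rw [h4 X0, h4 Y0, ← hTdef] at this
      simpa [hDmdef, hPdef, hQdef] using this.symm
    have key : Cn' W e = (dec W).1 • P e + (dec W).2.1 • Q e + (dec W).2.2 • Dm e := by
      conv_lhs => rw [hdec W]
      rw [h1, h1, LinearMap.add_apply, LinearMap.add_apply, h2, h2, h2,
          h4 X0, h4 Y0, hT']
    rw [key, hCn_apply]
end

section
/- Let X = ∂/∂x, Y = ∂/∂y + x∂/∂z on ℝ³. The space of pairs of smooth functions (f,g) on ℝ³ satisfying Xf = 0, Xg + Yf = 0, Yg = 0 is exactly 5-dimensional, consisting of f = 2pz + qy² + ry + s, g = 2q(z − xy) − px² − rx + t for constants p, q, r, s, t. -/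
/-- The 3-dimensional Darboux model `(x, y, z) ∈ ℝ³`. -/
abbrev M3 := ℝ × ℝ × ℝ

/-- The contact vector field `X = ∂/∂x`. -/
noncomputable def XF (f : M3 → ℝ) (p : M3) : ℝ := fderiv ℝ f p (1, 0, 0)

/-- The contact vector field `Y = ∂/∂y + x ∂/∂z`. -/
noncomputable def YF (f : M3 → ℝ) (p : M3) : ℝ :=
  fderiv ℝ f p (0, 1, 0) + p.1 * fderiv ℝ f p (0, 0, 1)


variable {E : Type*} [NormedAddCommGroup E] [NormedSpace ℝ E]

lemma lineHasDerivAt {h : E → ℝ} (hd : Differentiable ℝ h) (w v : E) (t : ℝ) :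
    HasDerivAt (fun t : ℝ => h (w + t • v)) (fderiv ℝ h (w + t • v) v) t := by
  have hline : HasDerivAt (fun t : ℝ => w + t • v) v t := by
    simpa using (((hasDerivAt_id t).smul_const v).const_add w)
  have := ((hd (w + t • v)).hasFDerivAt).comp_hasDerivAt t hline
  exact this

lemma recon {h : E → ℝ} (hd : Differentiable ℝ h) (w v : E) (c C : ℝ → ℝ)
    (hC : ∀ t, HasDerivAt C (c t) t)
    (hc : ∀ t : ℝ, fderiv ℝ h (w + t • v) v = c t) :
    ∀ t : ℝ, h (w + t • v) = h w + (C t - C 0) := by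
  have key : ∀ t : ℝ, HasDerivAt (fun t : ℝ => h (w + t • v) - C t) 0 t := by
    intro t
    have := (lineHasDerivAt hd w v t).sub (hC t)
    rw [hc t, sub_self] at this
    exact this
  have hconst : ∀ t : ℝ, h (w + t • v) - C t = h (w + (0:ℝ) • v) - C 0 :=
    fun t => is_const_of_deriv_eq_zero (fun t => (key t).differentiableAt)
      (fun t => (key t).deriv) t 0
  intro t
  have := hconst t
  simp only [zero_smul, add_zero] at this
  linarith

lemma fderiv_eq_of_line {f : E → ℝ} (hd : Differentiable ℝ f) (w v : E) {d : ℝ}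
    (h : HasDerivAt (fun t : ℝ => f (w + t • v)) d 0) : fderiv ℝ f w v = d := by
  have h0 := lineHasDerivAt hd w v 0
  simp only [zero_smul, add_zero] at h0
  exact h0.unique (by simpa using h)

section Forward
variable (f g : M3 → ℝ)

lemma forward (hf : ContDiff ℝ (⊤ : ℕ∞) f) (hg : ContDiff ℝ (⊤ : ℕ∞) g)
    (h1 : ∀ w : M3, fderiv ℝ f w (1,0,0) = 0)
    (h2 : ∀ w : M3, fderiv ℝ g w (1,0,0)
      + (fderiv ℝ f w (0,1,0) + w.1 * fderiv ℝ f w (0,0,1)) = 0)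
    (h3 : ∀ w : M3, fderiv ℝ g w (0,1,0) + w.1 * fderiv ℝ g w (0,0,1) = 0) :
    ∃ p q r s t : ℝ, ∀ w : M3,
      f w = 2 * p * w.2.2 + q * w.2.1 ^ 2 + r * w.2.1 + s ∧
      g w = 2 * q * (w.2.2 - w.1 * w.2.1) - p * w.1 ^ 2 - r * w.1 + t := by
  have hfd : Differentiable ℝ f := hf.differentiable (by simp)
  have hgd : Differentiable ℝ g := hg.differentiable (by simp)
  -- f0, g0 on ℝ²
  set f0 : ℝ × ℝ → ℝ := fun u => f (0, u) with hf0def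
  set g0 : ℝ × ℝ → ℝ := fun u => g (0, u) with hg0def
  have hf0 : ContDiff ℝ (⊤ : ℕ∞) f0 := hf.comp (contDiff_const.prodMk contDiff_id)
  have hg0 : ContDiff ℝ (⊤ : ℕ∞) g0 := hg.comp (contDiff_const.prodMk contDiff_id)
  have hf0d : Differentiable ℝ f0 := hf0.differentiable (by simp)
  have hg0d : Differentiable ℝ g0 := hg0.differentiable (by simp)
  -- f w = f0 w.2
  have hf_rep : ∀ w : M3, f w = f0 w.2 := by
    intro w
    have := recon hfd ((0:ℝ), w.2) ((1:ℝ),(0:ℝ),(0:ℝ)) 0 0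
      (fun t => hasDerivAt_const t 0) (fun t => h1 _) w.1
    have hpt : ((0:ℝ), w.2) + w.1 • ((1:ℝ),(0:ℝ),(0:ℝ)) = w := by
      simp [Prod.ext_iff]
    rw [hpt] at this
    simpa [hf0def] using this
  -- derivatives of f factor through f0
  have hf_eq : f = fun w : M3 => f0 w.2 := funext hf_rep
  have hfv : ∀ (w : M3) (v : M3), fderiv ℝ f w v = fderiv ℝ f0 w.2 v.2 := by
    intro w v
    have h : HasFDerivAt f ((fderiv ℝ f0 w.2).comp
        (ContinuousLinearMap.snd ℝ ℝ (ℝ × ℝ))) w := by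
      rw [hf_eq]
      exact ((hf0d w.2).hasFDerivAt).comp w hasFDerivAt_snd
    rw [h.fderiv]
    rfl
  -- A = ∂_y f0, B = ∂_z f0
  set A : ℝ × ℝ → ℝ := fun u => fderiv ℝ f0 u ((1:ℝ),(0:ℝ)) with hAdef
  set B : ℝ × ℝ → ℝ := fun u => fderiv ℝ f0 u ((0:ℝ),(1:ℝ)) with hBdef
  have hfd' : ContDiff ℝ (⊤ : ℕ∞) (fderiv ℝ f0) := hf0.fderiv_right (le_refl _)
  have hA : ContDiff ℝ (⊤ : ℕ∞) A := hfd'.clm_apply contDiff_const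
  have hB : ContDiff ℝ (⊤ : ℕ∞) B := hfd'.clm_apply contDiff_const
  have hAd : Differentiable ℝ A := hA.differentiable (by simp)
  have hBd : Differentiable ℝ B := hB.differentiable (by simp)
  -- ∂_x g = -(A + x B)
  have hgx : ∀ w : M3, fderiv ℝ g w (1,0,0) = -(A w.2 + w.1 * B w.2) := by
    intro w
    have := h2 w
    rw [hfv w (0,1,0), hfv w (0,0,1)] at this
    simp only [hAdef, hBdef]
    linarith
  -- g w = g0 w.2 - x A - x²/2 B
  have hg_rep : ∀ w : M3,
      g w = g0 w.2 - w.1 * A w.2 - w.1^2/2 * B w.2 := by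
    intro w
    have hC : ∀ t : ℝ, HasDerivAt
        (fun x : ℝ => -(A w.2 * x + B w.2 * (x^2/2))) (-(A w.2 + t * B w.2)) t := by
      intro t
      have h1' : HasDerivAt (fun x : ℝ => A w.2 * x) (A w.2) t := by
        simpa using (hasDerivAt_id t).const_mul (A w.2)
      have h2' : HasDerivAt (fun x : ℝ => B w.2 * (x^2/2)) (B w.2 * t) t := by
        have := (((hasDerivAt_pow 2 t)).div_const 2).const_mul (B w.2)
        refine this.congr_deriv ?_
        push_cast; ring
      have := (h1'.add h2').neg
      refine this.congr_deriv ?_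
      ring
    have := recon hgd ((0:ℝ), w.2) ((1:ℝ),(0:ℝ),(0:ℝ))
      (fun t => -(A w.2 + t * B w.2)) (fun x => -(A w.2 * x + B w.2 * (x^2/2)))
      hC (fun t => by
        have hpt : ((0:ℝ), w.2) + t • ((1:ℝ),(0:ℝ),(0:ℝ)) = (t, w.2) := by
          simp [Prod.ext_iff]
        rw [hpt, hgx (t, w.2)]) w.1
    have hpt : ((0:ℝ), w.2) + w.1 • ((1:ℝ),(0:ℝ),(0:ℝ)) = w := by
      simp [Prod.ext_iff]
    rw [hpt] at this
    rw [this]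
    simp only [hg0def]
    ring
  have hAapp : ∀ u : ℝ × ℝ, A u = fderiv ℝ f0 u ((1:ℝ),(0:ℝ)) := fun u => by rw [hAdef]
  have hBapp : ∀ u : ℝ × ℝ, B u = fderiv ℝ f0 u ((0:ℝ),(1:ℝ)) := fun u => by rw [hBdef]
  -- directional derivatives of g in the y and z directions
  have hgY1 : ∀ w : M3, fderiv ℝ g w (0,1,0)
      = fderiv ℝ g0 w.2 (1,0) - w.1 * fderiv ℝ A w.2 (1,0)
        - w.1^2/2 * fderiv ℝ B w.2 (1,0) := by
    intro w
    apply fderiv_eq_of_line hgd w (0,1,0)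
    have heq : (fun t : ℝ => g (w + t • ((0:ℝ),(1:ℝ),(0:ℝ))))
        = fun t : ℝ => g0 (w.2 + t • ((1:ℝ),(0:ℝ)))
            - w.1 * A (w.2 + t • ((1:ℝ),(0:ℝ)))
            - w.1^2/2 * B (w.2 + t • ((1:ℝ),(0:ℝ))) := by
      funext t
      rw [hg_rep]
      simp
    rw [heq]
    have := ((lineHasDerivAt hg0d w.2 ((1:ℝ),(0:ℝ)) 0).sub
      ((lineHasDerivAt hAd w.2 ((1:ℝ),(0:ℝ)) 0).const_mul w.1)).sub
      ((lineHasDerivAt hBd w.2 ((1:ℝ),(0:ℝ)) 0).const_mul (w.1^2/2))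
    exact this.congr_deriv (by simp)
  have hgY2 : ∀ w : M3, fderiv ℝ g w (0,0,1)
      = fderiv ℝ g0 w.2 (0,1) - w.1 * fderiv ℝ A w.2 (0,1)
        - w.1^2/2 * fderiv ℝ B w.2 (0,1) := by
    intro w
    apply fderiv_eq_of_line hgd w (0,0,1)
    have heq : (fun t : ℝ => g (w + t • ((0:ℝ),(0:ℝ),(1:ℝ))))
        = fun t : ℝ => g0 (w.2 + t • ((0:ℝ),(1:ℝ)))
            - w.1 * A (w.2 + t • ((0:ℝ),(1:ℝ)))
            - w.1^2/2 * B (w.2 + t • ((0:ℝ),(1:ℝ))) := by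
      funext t
      rw [hg_rep]
      simp
    rw [heq]
    have := ((lineHasDerivAt hg0d w.2 ((0:ℝ),(1:ℝ)) 0).sub
      ((lineHasDerivAt hAd w.2 ((0:ℝ),(1:ℝ)) 0).const_mul w.1)).sub
      ((lineHasDerivAt hBd w.2 ((0:ℝ),(1:ℝ)) 0).const_mul (w.1^2/2))
    exact this.congr_deriv (by simp)
  -- coefficient equations from Yg = 0
  have key : ∀ u : ℝ × ℝ,
      fderiv ℝ g0 u (1,0) = 0 ∧
      fderiv ℝ g0 u (0,1) = fderiv ℝ A u (1,0) ∧
      fderiv ℝ B u (1,0) + 2 * fderiv ℝ A u (0,1) = 0 ∧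
      fderiv ℝ B u (0,1) = 0 := by
    intro u
    have H : ∀ x : ℝ,
        (fderiv ℝ g0 u (1,0) - x * fderiv ℝ A u (1,0)
          - x^2/2 * fderiv ℝ B u (1,0))
        + x * (fderiv ℝ g0 u (0,1) - x * fderiv ℝ A u (0,1)
          - x^2/2 * fderiv ℝ B u (0,1)) = 0 := by
      intro x
      have := h3 (x, u)
      rw [hgY1 (x, u), hgY2 (x, u)] at this
      simpa using this
    have e0 := H 0
    have e1 := H 1
    have e2 := H (-1)
    have e3 := H 2
    norm_num at e0 e1 e2 e3
    refine ⟨by linarith, by linarith, by linarith, by linarith⟩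
  -- Clairaut: ∂_z A = ∂_y B
  have clair : ∀ u : ℝ × ℝ, fderiv ℝ A u (0,1) = fderiv ℝ B u (1,0) := by
    intro u
    have hdd : DifferentiableAt ℝ (fderiv ℝ f0) u := (hfd'.differentiable (by simp)) u
    have hAfd : fderiv ℝ A u = (fderiv ℝ (fderiv ℝ f0) u).flip ((1:ℝ),(0:ℝ)) := by
      rw [hAdef]
      rw [fderiv_clm_apply hdd (differentiableAt_const _)]
      simp
    have hBfd : fderiv ℝ B u = (fderiv ℝ (fderiv ℝ f0) u).flip ((0:ℝ),(1:ℝ)) := by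
      rw [hBdef]
      rw [fderiv_clm_apply hdd (differentiableAt_const _)]
      simp
    have hsym := second_derivative_symmetric
      (fun y => (hf0d y).hasFDerivAt) (hdd.hasFDerivAt)
      ((0:ℝ),(1:ℝ)) ((1:ℝ),(0:ℝ))
    rw [hAfd, hBfd]
    simpa using hsym
  -- consequences
  have hDyB : ∀ u : ℝ × ℝ, fderiv ℝ B u (1,0) = 0 := by
    intro u
    have h := (key u).2.2.1
    have h' := clair u
    linarith
  have hDzA : ∀ u : ℝ × ℝ, fderiv ℝ A u (0,1) = 0 := by
    intro u
    have h := (key u).2.2.1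
    have h' := clair u
    linarith
  have hDzB : ∀ u : ℝ × ℝ, fderiv ℝ B u (0,1) = 0 := fun u => (key u).2.2.2
  have hDyg0 : ∀ u : ℝ × ℝ, fderiv ℝ g0 u (1,0) = 0 := fun u => (key u).1
  -- B is constant
  have hBconst : ∀ u : ℝ × ℝ, B u = B (0,0) := by
    intro u
    have s1 := recon hBd ((0:ℝ), u.2) ((1:ℝ),(0:ℝ)) 0 0
      (fun t => hasDerivAt_const t 0) (fun t => hDyB _) u.1
    have s2 := recon hBd ((0:ℝ), (0:ℝ)) ((0:ℝ),(1:ℝ)) 0 0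
      (fun t => hasDerivAt_const t 0) (fun t => hDzB _) u.2
    have p1 : ((0:ℝ), u.2) + u.1 • ((1:ℝ),(0:ℝ)) = u := by simp [Prod.ext_iff]
    have p2 : ((0:ℝ), (0:ℝ)) + u.2 • ((0:ℝ),(1:ℝ)) = ((0:ℝ), u.2) := by
      simp [Prod.ext_iff]
    rw [p1] at s1
    rw [p2] at s2
    simp at s1 s2
    rw [s1, s2]
  -- A only depends on y
  have hAy : ∀ u : ℝ × ℝ, A u = A (u.1, 0) := by
    intro u
    have s1 := recon hAd ((u.1 : ℝ), (0:ℝ)) ((0:ℝ),(1:ℝ)) 0 0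
      (fun t => hasDerivAt_const t 0) (fun t => hDzA _) u.2
    have p1 : ((u.1 : ℝ), (0:ℝ)) + u.2 • ((0:ℝ),(1:ℝ)) = u := by simp [Prod.ext_iff]
    rw [p1] at s1
    simpa using s1
  -- g0 only depends on z
  have hg0y : ∀ u : ℝ × ℝ, g0 u = g0 (0, u.2) := by
    intro u
    have s1 := recon hg0d ((0:ℝ), u.2) ((1:ℝ),(0:ℝ)) 0 0
      (fun t => hasDerivAt_const t 0) (fun t => hDyg0 _) u.1
    have p1 : ((0:ℝ), u.2) + u.1 • ((1:ℝ),(0:ℝ)) = u := by simp [Prod.ext_iff]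
    rw [p1] at s1
    simpa using s1
  -- ∂_y A and ∂_z g0 are the same constant
  set α : ℝ → ℝ := fun y => A (y, 0) with hαdef
  set γ : ℝ → ℝ := fun z => g0 (0, z) with hγdef
  have hαd : Differentiable ℝ α :=
    hAd.comp (differentiable_id.prodMk (differentiable_const _))
  have hγd : Differentiable ℝ γ :=
    hg0d.comp ((differentiable_const _).prodMk differentiable_id)
  have hAv : ∀ u : ℝ × ℝ, fderiv ℝ A u (1,0) = fderiv ℝ α u.1 1 := by
    intro u
    have hA_eq : A = fun u : ℝ × ℝ => α u.1 := by
      funext u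
      rw [hαdef]
      exact hAy u
    have h : HasFDerivAt A ((fderiv ℝ α u.1).comp
        (ContinuousLinearMap.fst ℝ ℝ ℝ)) u := by
      rw [hA_eq]
      exact ((hαd u.1).hasFDerivAt).comp u hasFDerivAt_fst
    rw [h.fderiv]
    rfl
  have hg0v : ∀ u : ℝ × ℝ, fderiv ℝ g0 u (0,1) = fderiv ℝ γ u.2 1 := by
    intro u
    have hg0_eq : g0 = fun u : ℝ × ℝ => γ u.2 := by
      funext u
      rw [hγdef]
      exact hg0y u
    have h : HasFDerivAt g0 ((fderiv ℝ γ u.2).comp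
        (ContinuousLinearMap.snd ℝ ℝ ℝ)) u := by
      rw [hg0_eq]
      exact ((hγd u.2).hasFDerivAt).comp u hasFDerivAt_snd
    rw [h.fderiv]
    rfl
  -- the common constant 2q
  have hmix : ∀ u : ℝ × ℝ, fderiv ℝ γ u.2 1 = fderiv ℝ α u.1 1 := by
    intro u
    have := (key u).2.1
    rw [hAv u, hg0v u] at this
    exact this
  have hαconst : ∀ y : ℝ, fderiv ℝ α y 1 = fderiv ℝ α 0 1 := by
    intro y
    have h1' := hmix (y, 0)
    have h2' := hmix (0, 0)
    simp at h1' h2'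
    rw [fderiv_apply_one_eq_deriv, fderiv_apply_one_eq_deriv]
    rw [← h1', h2']
  have hγconst : ∀ z : ℝ, fderiv ℝ γ z 1 = fderiv ℝ α 0 1 := by
    intro z
    have h1' := hmix (0, z)
    simp at h1'
    rw [fderiv_apply_one_eq_deriv, fderiv_apply_one_eq_deriv]
    rw [h1']
  refine ⟨B (0,0) / 2, fderiv ℝ α 0 1 / 2, A (0,0), f0 (0,0), g0 (0,0), ?_⟩
  -- A u = 2q y + r
  have hAfinal : ∀ u : ℝ × ℝ, A u = fderiv ℝ α 0 1 * u.1 + A (0,0) := by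
    intro u
    have s1 := recon hAd ((0:ℝ), (0:ℝ)) ((1:ℝ),(0:ℝ))
      (fun _ => fderiv ℝ α 0 1) (fun t => fderiv ℝ α 0 1 * t)
      (fun t => by simpa using (hasDerivAt_id t).const_mul (fderiv ℝ α 0 1))
      (fun t => by
        have p1 : ((0:ℝ), (0:ℝ)) + t • ((1:ℝ),(0:ℝ)) = ((t:ℝ), (0:ℝ)) := by
          simp [Prod.ext_iff]
        rw [p1, hAv ((t:ℝ), (0:ℝ))]
        simpa using hαconst t) u.1
    have p1 : ((0:ℝ), (0:ℝ)) + u.1 • ((1:ℝ),(0:ℝ)) = (u.1, (0:ℝ)) := by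
      simp [Prod.ext_iff]
    rw [p1] at s1
    rw [hAy u, s1]
    ring
  -- g0 u = 2q z + t
  have hg0final : ∀ u : ℝ × ℝ, g0 u = fderiv ℝ α 0 1 * u.2 + g0 (0,0) := by
    intro u
    have s1 := recon hg0d ((0:ℝ), (0:ℝ)) ((0:ℝ),(1:ℝ))
      (fun _ => fderiv ℝ α 0 1) (fun t => fderiv ℝ α 0 1 * t)
      (fun t => by simpa using (hasDerivAt_id t).const_mul (fderiv ℝ α 0 1))
      (fun t => by
        have p1 : ((0:ℝ), (0:ℝ)) + t • ((0:ℝ),(1:ℝ)) = ((0:ℝ), (t:ℝ)) := by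
          simp [Prod.ext_iff]
        rw [p1, hg0v ((0:ℝ), (t:ℝ))]
        simpa using hγconst t) u.2
    have p1 : ((0:ℝ), (0:ℝ)) + u.2 • ((0:ℝ),(1:ℝ)) = ((0:ℝ), u.2) := by
      simp [Prod.ext_iff]
    rw [p1] at s1
    rw [hg0y u, s1]
    ring
  -- f0 u = q y² + r y + 2p z + s
  have hf0z : ∀ u : ℝ × ℝ, f0 u = f0 (u.1, 0) + B (0,0) * u.2 := by
    intro u
    have s1 := recon hf0d ((u.1 : ℝ), (0:ℝ)) ((0:ℝ),(1:ℝ))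
      (fun _ => B (0,0)) (fun t => B (0,0) * t)
      (fun t => by simpa using (hasDerivAt_id t).const_mul (B (0,0)))
      (fun t => by
        have p1 : ((u.1 : ℝ), (0:ℝ)) + t • ((0:ℝ),(1:ℝ)) = ((u.1 : ℝ), (t:ℝ)) := by
          simp [Prod.ext_iff]
        rw [p1, ← hBapp ((u.1 : ℝ), (t:ℝ))]
        exact hBconst _) u.2
    have p1 : ((u.1 : ℝ), (0:ℝ)) + u.2 • ((0:ℝ),(1:ℝ)) = u := by
      simp [Prod.ext_iff]
    rw [p1] at s1
    rw [s1]
    ring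
  have hf0y : ∀ y : ℝ, f0 (y, 0)
      = f0 (0,0) + (fderiv ℝ α 0 1 / 2 * y^2 + A (0,0) * y) := by
    intro y
    have s1 := recon hf0d ((0:ℝ), (0:ℝ)) ((1:ℝ),(0:ℝ))
      (fun t => fderiv ℝ α 0 1 * t + A (0,0))
      (fun t => fderiv ℝ α 0 1 / 2 * t^2 + A (0,0) * t)
      (fun t => by
        have h1' : HasDerivAt (fun t : ℝ => fderiv ℝ α 0 1 / 2 * t^2)
            (fderiv ℝ α 0 1 * t) t := by
          have := (hasDerivAt_pow 2 t).const_mul (fderiv ℝ α 0 1 / 2)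
          refine this.congr_deriv ?_
          push_cast; ring
        exact (h1'.add ((hasDerivAt_id t).const_mul (A (0,0)))).congr_deriv (by simp))
      (fun t => by
        have p1 : ((0:ℝ), (0:ℝ)) + t • ((1:ℝ),(0:ℝ)) = ((t:ℝ), (0:ℝ)) := by
          simp [Prod.ext_iff]
        rw [p1, ← hAapp ((t:ℝ), (0:ℝ))]
        have := hAfinal ((t:ℝ), (0:ℝ))
        simpa using this) y
    have p1 : ((0:ℝ), (0:ℝ)) + y • ((1:ℝ),(0:ℝ)) = ((y:ℝ), (0:ℝ)) := by
      simp [Prod.ext_iff]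
    rw [p1] at s1
    rw [s1]
    ring
  intro w
  constructor
  · rw [hf_rep w, hf0z w.2, hf0y w.2.1]
    ring
  · rw [hg_rep w, hg0final w.2, hAfinal w.2, hBconst w.2]
    ring

end Forward


lemma converse_dir (p q r s t : ℝ) (w : M3) :
    XF (fun w : M3 => 2*p*w.2.2 + q*w.2.1^2 + r*w.2.1 + s) w = 0 ∧
    XF (fun w : M3 => 2*q*(w.2.2 - w.1*w.2.1) - p*w.1^2 - r*w.1 + t) w
      + YF (fun w : M3 => 2*p*w.2.2 + q*w.2.1^2 + r*w.2.1 + s) w = 0 ∧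
    YF (fun w : M3 => 2*q*(w.2.2 - w.1*w.2.1) - p*w.1^2 - r*w.1 + t) w = 0 := by
  have hu : ∀ a : ℝ, HasDerivAt (fun u : ℝ => a + u) 1 0 := fun a => by
    simpa using ((hasDerivAt_id (0:ℝ)).const_add a)
  have fX : fderiv ℝ (fun w : M3 => 2*p*w.2.2 + q*w.2.1^2 + r*w.2.1 + s) w (1,0,0) = 0 := by
    apply fderiv_eq_of_line (by fun_prop) w (1,0,0)
    have : (fun u : ℝ => (fun w : M3 => 2*p*w.2.2 + q*w.2.1^2 + r*w.2.1 + s) (w + u • ((1:ℝ),(0:ℝ),(0:ℝ))))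
        = fun _ : ℝ => 2*p*w.2.2 + q*w.2.1^2 + r*w.2.1 + s := by
      funext u; simp
    rw [this]; exact hasDerivAt_const _ _
  have fY1 : fderiv ℝ (fun w : M3 => 2*p*w.2.2 + q*w.2.1^2 + r*w.2.1 + s) w (0,1,0)
      = 2*q*w.2.1 + r := by
    apply fderiv_eq_of_line (by fun_prop) w (0,1,0)
    have heq : (fun u : ℝ => (fun w : M3 => 2*p*w.2.2 + q*w.2.1^2 + r*w.2.1 + s) (w + u • ((0:ℝ),(1:ℝ),(0:ℝ))))
        = fun u : ℝ => 2*p*w.2.2 + q*(w.2.1+u)^2 + r*(w.2.1+u) + s := by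
      funext u; simp
    rw [heq]
    have := ((((hu w.2.1).pow 2).const_mul q).const_add (2*p*w.2.2)).add
      (((hu w.2.1).const_mul r)) |>.add_const s
    refine this.congr_deriv ?_; push_cast; ring
  have fY2 : fderiv ℝ (fun w : M3 => 2*p*w.2.2 + q*w.2.1^2 + r*w.2.1 + s) w (0,0,1) = 2*p := by
    apply fderiv_eq_of_line (by fun_prop) w (0,0,1)
    have heq : (fun u : ℝ => (fun w : M3 => 2*p*w.2.2 + q*w.2.1^2 + r*w.2.1 + s) (w + u • ((0:ℝ),(0:ℝ),(1:ℝ))))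
        = fun u : ℝ => 2*p*(w.2.2+u) + q*w.2.1^2 + r*w.2.1 + s := by
      funext u; simp
    rw [heq]
    have := ((((hu w.2.2).const_mul (2*p)).add_const (q*w.2.1^2)).add_const (r*w.2.1)).add_const s
    refine this.congr_deriv ?_; ring
  have gX : fderiv ℝ (fun w : M3 => 2*q*(w.2.2 - w.1*w.2.1) - p*w.1^2 - r*w.1 + t) w (1,0,0)
      = -2*q*w.2.1 - 2*p*w.1 - r := by
    apply fderiv_eq_of_line (by fun_prop) w (1,0,0)
    have heq : (fun u : ℝ => (fun w : M3 => 2*q*(w.2.2 - w.1*w.2.1) - p*w.1^2 - r*w.1 + t) (w + u • ((1:ℝ),(0:ℝ),(0:ℝ))))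
        = fun u : ℝ => 2*q*(w.2.2 - (w.1+u)*w.2.1) - p*(w.1+u)^2 - r*(w.1+u) + t := by
      funext u; simp
    rw [heq]
    have := (((((hu w.1).mul_const w.2.1).const_sub w.2.2).const_mul (2*q)).sub
      (((hu w.1).pow 2).const_mul p)).sub ((hu w.1).const_mul r) |>.add_const t
    refine this.congr_deriv ?_; push_cast; ring
  have gY1 : fderiv ℝ (fun w : M3 => 2*q*(w.2.2 - w.1*w.2.1) - p*w.1^2 - r*w.1 + t) w (0,1,0)
      = -2*q*w.1 := by
    apply fderiv_eq_of_line (by fun_prop) w (0,1,0)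
    have heq : (fun u : ℝ => (fun w : M3 => 2*q*(w.2.2 - w.1*w.2.1) - p*w.1^2 - r*w.1 + t) (w + u • ((0:ℝ),(1:ℝ),(0:ℝ))))
        = fun u : ℝ => 2*q*(w.2.2 - w.1*(w.2.1+u)) - p*w.1^2 - r*w.1 + t := by
      funext u; simp
    rw [heq]
    have := (((((hu w.2.1).const_mul w.1).const_sub w.2.2).const_mul (2*q)).sub_const (p*w.1^2)).sub_const (r*w.1) |>.add_const t
    refine this.congr_deriv ?_; ring
  have gY2 : fderiv ℝ (fun w : M3 => 2*q*(w.2.2 - w.1*w.2.1) - p*w.1^2 - r*w.1 + t) w (0,0,1)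
      = 2*q := by
    apply fderiv_eq_of_line (by fun_prop) w (0,0,1)
    have heq : (fun u : ℝ => (fun w : M3 => 2*q*(w.2.2 - w.1*w.2.1) - p*w.1^2 - r*w.1 + t) (w + u • ((0:ℝ),(0:ℝ),(1:ℝ))))
        = fun u : ℝ => 2*q*((w.2.2+u) - w.1*w.2.1) - p*w.1^2 - r*w.1 + t := by
      funext u; simp
    rw [heq]
    have := ((((((hu w.2.2).sub_const (w.1*w.2.1))).const_mul (2*q)).sub_const (p*w.1^2)).sub_const (r*w.1)).add_const t
    refine this.congr_deriv ?_; ring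
  refine ⟨?_, ?_, ?_⟩ <;> simp only [XF, YF, fX, fY1, fY2, gX, gY1, gY2] <;> ring


/-- The space of pairs of smooth functions `(f, g)` on `ℝ³`
satisfying `Xf = 0`, `Xg + Yf = 0`, `Yg = 0` (with `X = ∂ₓ`, `Y = ∂_y + x∂_z`) is
exactly 5-dimensional, consisting of `f = 2pz + qy² + ry + s`,
`g = 2q(z − xy) − px² − rx + t` for constants `p, q, r, s, t`. -/
theorem statement14 :
    (∀ f g : M3 → ℝ, ContDiff ℝ (⊤ : ℕ∞) f → ContDiff ℝ (⊤ : ℕ∞) g →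
      ((∀ w : M3, XF f w = 0 ∧ XF g w + YF f w = 0 ∧ YF g w = 0) ↔
        ∃ p q r s t : ℝ, ∀ w : M3,
          f w = 2 * p * w.2.2 + q * w.2.1 ^ 2 + r * w.2.1 + s ∧
          g w = 2 * q * (w.2.2 - w.1 * w.2.1) - p * w.1 ^ 2 - r * w.1 + t)) ∧
    -- the parameters are uniquely determined, so the solution space is 5-dimensional:
    (∀ p q r s t p' q' r' s' t' : ℝ,
      (∀ w : M3,
        2 * p * w.2.2 + q * w.2.1 ^ 2 + r * w.2.1 + s =
          2 * p' * w.2.2 + q' * w.2.1 ^ 2 + r' * w.2.1 + s' ∧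
        2 * q * (w.2.2 - w.1 * w.2.1) - p * w.1 ^ 2 - r * w.1 + t =
          2 * q' * (w.2.2 - w.1 * w.2.1) - p' * w.1 ^ 2 - r' * w.1 + t') →
      p = p' ∧ q = q' ∧ r = r' ∧ s = s' ∧ t = t') := by
  constructor
  · intro f g hf hg
    constructor
    · intro hsol
      apply forward f g hf hg
      · exact fun w => (hsol w).1
      · intro w
        have := (hsol w).2.1
        simpa [XF, YF] using this
      · intro w
        have := (hsol w).2.2
        simpa [YF] using this
    · rintro ⟨p, q, r, s, t, hpt⟩ w
      have hfe : f = fun w : M3 => 2*p*w.2.2 + q*w.2.1^2 + r*w.2.1 + s :=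
        funext fun w => (hpt w).1
      have hge : g = fun w : M3 => 2*q*(w.2.2 - w.1*w.2.1) - p*w.1^2 - r*w.1 + t :=
        funext fun w => (hpt w).2
      rw [hfe, hge]
      exact converse_dir p q r s t w
  · intro p q r s t p' q' r' s' t' h
    have h000 := h (0, 0, 0)
    have h001 := h (0, 0, 1)
    have h010 := h (0, 1, 0)
    have h100 := h (1, 0, 0)
    norm_num at h000 h001 h010 h100
    obtain ⟨hs, ht⟩ := h000
    refine ⟨by linarith [h001.1], by linarith [h010.1, h001.1], ?_, hs, ht⟩
    linarith [h100.2, h001.1]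
end
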